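/- If Φ = {φ_i}_{i∈I_m} does phase retrieval in ℝ^n, then m ≥ 2n - 1. -/

import Mathlib

/-!
If `m < 2n - 1`, the indices split into two sets `S`, `Sᶜ` of fewer than `n` elements each, so
there are nonzero `u ⊥ φ S` and `v ⊥ φ Sᶜ`. Then `u + v` and `u - v` have the same measurements
`|⟪·, φ i⟫|` for every `i`, yet are neither equal nor opposite.
-/

open Module

lemma exists_ne_zero_forall_inner_eq_zero_of_card_lt {𝕜 E ι : Type*} [RCLike 𝕜]
    [NormedAddCommGroup E] [InnerProductSpace 𝕜 E] [FiniteDimensional 𝕜 E]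
    (φ : ι → E) (s : Finset ι) (hs : s.card < finrank 𝕜 E) :
    ∃ u : E, u ≠ 0 ∧ ∀ i ∈ s, inner 𝕜 u (φ i) = 0 := by
  let f : E →ₗ[𝕜] s → 𝕜 := LinearMap.pi fun i => innerₛₗ 𝕜 (φ i)
  have hker : LinearMap.ker f ≠ ⊥ := f.ker_ne_bot_of_finrank_lt (by simpa using hs)
  obtain ⟨u, hu, hu0⟩ := Submodule.exists_mem_ne_zero_of_ne_bot hker
  refine ⟨u, hu0, fun i hi => inner_eq_zero_symm.mp ?_⟩
  exact congrFun (LinearMap.mem_ker.mp hu) ⟨i, hi⟩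

def DoesPhaseRetrieval {ι E : Type*} [NormedAddCommGroup E] [InnerProductSpace ℝ E]
    (φ : ι → E) : Prop :=
  ∀ x y : E, (∀ i, |(inner ℝ x (φ i) : ℝ)| = |(inner ℝ y (φ i) : ℝ)|) → x = y ∨ x = -y

namespace DoesPhaseRetrieval

variable {ι E : Type*} [NormedAddCommGroup E] [InnerProductSpace ℝ E] {φ : ι → E}

theorem eq_zero_or_eq_zero_of_orthogonal (hφ : DoesPhaseRetrieval φ) (S : Set ι) {u v : E}
    (hu : ∀ i ∈ S, inner ℝ u (φ i) = 0) (hv : ∀ i ∉ S, inner ℝ v (φ i) = 0) :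
    u = 0 ∨ v = 0 := by
  have hsame : ∀ i, |inner ℝ (u + v) (φ i)| = |inner ℝ (u - v) (φ i)| := by
    intro i
    rw [inner_add_left, inner_sub_left]
    by_cases hi : i ∈ S
    · simp [hu i hi]
    · simp [hv i hi]
  rcases hφ _ _ hsame with h | h
  · have h2v : (2 : ℝ) • v = 0 := by linear_combination (norm := module) h
    exact .inr (by simpa using h2v)
  · have h2u : (2 : ℝ) • u = 0 := by linear_combination (norm := module) h
    exact .inl (by simpa using h2u)

theorem two_mul_finrank_sub_one_le_card [Fintype ι] [FiniteDimensional ℝ E]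
    (hφ : DoesPhaseRetrieval φ) : 2 * finrank ℝ E - 1 ≤ Fintype.card ι := by
  classical
  by_contra! hcard
  obtain ⟨S, -, hS⟩ := Finset.exists_subset_card_eq
    (show min (finrank ℝ E - 1) (Fintype.card ι) ≤ (Finset.univ : Finset ι).card by simp)
  obtain ⟨u, hu0, hu⟩ := exists_ne_zero_forall_inner_eq_zero_of_card_lt (𝕜 := ℝ) φ S (by omega)
  obtain ⟨v, hv0, hv⟩ := exists_ne_zero_forall_inner_eq_zero_of_card_lt (𝕜 := ℝ) φ Sᶜ
    (by rw [Finset.card_compl]; omega)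
  exact (hφ.eq_zero_or_eq_zero_of_orthogonal S hu
    fun i hi => hv i (Finset.mem_compl.mpr hi)).elim hu0 hv0

end DoesPhaseRetrieval

/-- if `{φ i}_{i=1}^m` does phase retrieval in `ℝ^n`,
then `m ≥ 2n - 1`. -/
theorem phaseRetrieval_card_lower_bound {m n : ℕ}
    (φ : Fin m → EuclideanSpace ℝ (Fin n))
    (hPR : ∀ x y : EuclideanSpace ℝ (Fin n),
      (∀ i, |(inner ℝ x (φ i) : ℝ)| = |(inner ℝ y (φ i) : ℝ)|) → x = y ∨ x = -y) :
    2 * n - 1 ≤ m := by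
  simpa using DoesPhaseRetrieval.two_mul_finrank_sub_one_le_card hPR
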